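/- Let M be a connected matroid of rank r on [n] with n ≥ 2, and let F be a flat of M with ∅ ≠ F ≠ [n]. Then the face P_{M_F} of the matroid polytope P_M on which the linear functional Σ_{i∈F} x_i attains its maximum rk(F) — equivalently, the convex hull of the indicator vectors e_σ of the bases σ of M with |σ ∩ F| = rk(F) — has affine-hull dimension n − 2 if and only if both the restriction M|F and the contraction M/F are connected matroids. -/

import Mathlib

open Finset Pointwise

/-- The 0/1 indicator vector (in `ℝ^n`) of a finite set of coordinates. -/
def indVec {n : ℕ} (S : Finset (Fin n)) : Fin n → ℝ := fun i => if i ∈ S then 1 else 0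

/-- Independence with respect to a family `𝔅` of bases: being contained in a basis. -/
def FamIndep {n : ℕ} (𝔅 : Finset (Finset (Fin n))) (I : Finset (Fin n)) : Prop :=
  ∃ B ∈ 𝔅, I ⊆ B

/-- Circuits of the family `𝔅`: minimal dependent sets. -/
def FamCircuit {n : ℕ} (𝔅 : Finset (Finset (Fin n))) (C : Finset (Fin n)) : Prop :=
  ¬ FamIndep 𝔅 C ∧ ∀ D ⊂ C, FamIndep 𝔅 D

open scoped Classical in
/-- The rank of a set: maximal cardinality of an independent subset. -/
noncomputable def famRk {n : ℕ} (𝔅 : Finset (Finset (Fin n))) (F : Finset (Fin n)) : ℕ :=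
  (F.powerset.filter (fun I => FamIndep 𝔅 I)).sup Finset.card

open scoped Classical in
/-- The bases of the restriction to `F`: the maximal independent subsets of `F`. -/
noncomputable def famRestrictBases {n : ℕ} (𝔅 : Finset (Finset (Fin n)))
    (F : Finset (Fin n)) : Finset (Finset (Fin n)) :=
  F.powerset.filter fun B =>
    FamIndep 𝔅 B ∧ ∀ B' ⊆ F, FamIndep 𝔅 B' → B ⊆ B' → B = B'

open scoped Classical in
/-- The bases of the contraction by `F`: the sets `B \ F` where `B` is a basis meeting `F`
in a set of full rank `rk F`. -/
noncomputable def famContractBases {n : ℕ} (𝔅 : Finset (Finset (Fin n)))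
    (F : Finset (Fin n)) : Finset (Finset (Fin n)) :=
  (𝔅.filter fun B => (B ∩ F).card = famRk 𝔅 F).image (· \ F)

/-- `i` and `j` are related if equal or contained in a common circuit. -/
def FamConnRel {n : ℕ} (𝔅 : Finset (Finset (Fin n))) (i j : Fin n) : Prop :=
  i = j ∨ ∃ C, FamCircuit 𝔅 C ∧ i ∈ C ∧ j ∈ C

/-- Number of connected components: number of classes of the equivalence relation
generated by `FamConnRel`. -/
noncomputable def famNumComponents {n : ℕ} (𝔅 : Finset (Finset (Fin n))) : ℕ :=
  Nat.card (Quot (FamConnRel 𝔅))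

/-- Connectedness of the matroid presented by bases `𝔅` on the ground set `E`:
any two distinct elements of `E` lie in a common circuit (within `E`). -/
def FamConnectedOn {n : ℕ} (𝔅 : Finset (Finset (Fin n))) (E : Finset (Fin n)) : Prop :=
  ∀ i ∈ E, ∀ j ∈ E, i ≠ j → ∃ C, C ⊆ E ∧ FamCircuit 𝔅 C ∧ i ∈ C ∧ j ∈ C

/-- A matroid of rank `r` on the ground set `Fin n`, given by its collection of bases:
`r`-element sets satisfying the basis exchange axiom. -/
structure FinMatroid (n r : ℕ) where
  bases : Finset (Finset (Fin n))
  bases_nonempty : bases.Nonempty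
  card_bases : ∀ B ∈ bases, B.card = r
  exchange : ∀ B₁ ∈ bases, ∀ B₂ ∈ bases, ∀ i ∈ B₁ \ B₂,
      ∃ j ∈ B₂ \ B₁, insert j (B₁.erase i) ∈ bases

namespace FinMatroid

variable {n r : ℕ}

def Indep (M : FinMatroid n r) (I : Finset (Fin n)) : Prop := FamIndep M.bases I

def IsCircuit (M : FinMatroid n r) (C : Finset (Fin n)) : Prop := FamCircuit M.bases C

noncomputable def rk (M : FinMatroid n r) (F : Finset (Fin n)) : ℕ := famRk M.bases F

/-- A flat: no circuit leaves exactly one element outside `F`. -/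
def IsFlat (M : FinMatroid n r) (F : Finset (Fin n)) : Prop :=
  ∀ C, M.IsCircuit C → (C \ F).card ≠ 1

open scoped Classical in
/-- Closure of a set: the intersection of all flats containing it (the smallest flat
containing it). -/
noncomputable def closure (M : FinMatroid n r) (S : Finset (Fin n)) : Finset (Fin n) :=
  Finset.univ.filter fun i => ∀ F, M.IsFlat F → S ⊆ F → i ∈ F

/-- No single element is dependent. -/
def Loopless (M : FinMatroid n r) : Prop := ∀ i : Fin n, M.Indep {i}

noncomputable def numComponents (M : FinMatroid n r) : ℕ := famNumComponents M.bases

/-- Any two distinct elements lie in a common circuit. -/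
def Connected (M : FinMatroid n r) : Prop :=
  ∀ i j : Fin n, i ≠ j → ∃ C, M.IsCircuit C ∧ i ∈ C ∧ j ∈ C

/-- `B` is a `w`-maximal basis of `M`. -/
def IsMaxBasis (M : FinMatroid n r) (w : Fin n → ℝ) (B : Finset (Fin n)) : Prop :=
  B ∈ M.bases ∧ ∀ B' ∈ M.bases, ∑ i ∈ B', w i ≤ ∑ i ∈ B, w i

open scoped Classical in
/-- The bases of the matroid `M_w`: the `w`-maximal bases of `M`. -/
noncomputable def maxBases (M : FinMatroid n r) (w : Fin n → ℝ) :
    Finset (Finset (Fin n)) :=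
  M.bases.filter fun B => ∀ B' ∈ M.bases, ∑ i ∈ B', w i ≤ ∑ i ∈ B, w i

/-- Membership in the Bergman fan: on every circuit the minimum of `w` is attained
at least twice. -/
def InBergmanFan (M : FinMatroid n r) (w : Fin n → ℝ) : Prop :=
  ∀ C, M.IsCircuit C → ∃ i ∈ C, ∃ j ∈ C, i ≠ j ∧ w i = w j ∧ ∀ k ∈ C, w i ≤ w k

/-- The matroid polytope: convex hull of the indicator vectors of the bases. -/
noncomputable def polytope (M : FinMatroid n r) : Set (Fin n → ℝ) :=
  convexHull ℝ (indVec '' ↑M.bases)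

noncomputable def restrictBases (M : FinMatroid n r) (F : Finset (Fin n)) :
    Finset (Finset (Fin n)) :=
  famRestrictBases M.bases F

noncomputable def contractBases (M : FinMatroid n r) (F : Finset (Fin n)) :
    Finset (Finset (Fin n)) :=
  famContractBases M.bases F

/-- `𝓖` is a building set in the lattice of flats of `M` (with bottom element `∅` and
join = closure of union): for every nonempty flat `X`, the join map is an order
isomorphism from the product of the lower intervals of the maximal elements of
`𝓖` below `X` onto the lower interval of `X`. -/
def IsFlatBuilding (M : FinMatroid n r) (𝓖 : Set (Finset (Fin n))) : Prop :=
  (∀ F ∈ 𝓖, M.IsFlat F ∧ F ≠ ∅) ∧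
  ∀ X, M.IsFlat X → X ≠ ∅ →
    ∃ (k : ℕ) (g : Fin k → Finset (Fin n)),
      Function.Injective g ∧
      (∀ i, g i ∈ 𝓖 ∧ g i ⊆ X) ∧
      (∀ i, ∀ H ∈ 𝓖, H ⊆ X → g i ⊆ H → g i = H) ∧
      (∀ H ∈ 𝓖, H ⊆ X → ∃ i, H ⊆ g i) ∧
      ∃ e : (∀ i : Fin k, {F : Finset (Fin n) // M.IsFlat F ∧ F ⊆ g i}) ≃o
              {F : Finset (Fin n) // M.IsFlat F ∧ F ⊆ X},
        ∀ y, (e y).1 = M.closure (Finset.univ.sup fun i => (y i).1)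

/-- `S` is nested with respect to `𝓖` (in the lattice of flats of `M`): `S ⊆ 𝓖` and for
every subcollection of at least two pairwise incomparable members, their join (the
closure of their union) is not in `𝓖`. -/
def IsNested (M : FinMatroid n r) (𝓖 : Set (Finset (Fin n)))
    (S : Finset (Finset (Fin n))) : Prop :=
  ↑S ⊆ 𝓖 ∧ ∀ T ⊆ S, 2 ≤ T.card →
    (∀ A ∈ T, ∀ B ∈ T, A ≠ B → ¬ A ⊆ B ∧ ¬ B ⊆ A) →
    M.closure (T.sup id) ∉ 𝓖

end FinMatroid

/-- A building set in the Boolean lattice of subsets of `Fin r`: for every nonempty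
`X ⊆ [r]`, the union map is an order isomorphism from the product of the lower
intervals of the maximal elements of `𝓕` below `X` onto the lower interval of `X`. -/
def BoolBuilding {r : ℕ} (𝓕 : Set (Finset (Fin r))) : Prop :=
  (∀ F ∈ 𝓕, F ≠ ∅) ∧
  ∀ X : Finset (Fin r), X ≠ ∅ →
    ∃ (k : ℕ) (g : Fin k → Finset (Fin r)),
      Function.Injective g ∧
      (∀ i, g i ∈ 𝓕 ∧ g i ⊆ X) ∧
      (∀ i, ∀ H ∈ 𝓕, H ⊆ X → g i ⊆ H → g i = H) ∧
      (∀ H ∈ 𝓕, H ⊆ X → ∃ i, H ⊆ g i) ∧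
      ∃ e : (∀ i : Fin k, {F : Finset (Fin r) // F ⊆ g i}) ≃o
              {F : Finset (Fin r) // F ⊆ X},
        ∀ y, (e y).1 = Finset.univ.sup fun i => (y i).1

/-- `S` is nested with respect to `𝓕` in the Boolean lattice: for every subcollection
of at least two pairwise incomparable members, their union is not in `𝓕`. -/
def BoolNested {r : ℕ} (𝓕 : Set (Finset (Fin r))) (S : Finset (Finset (Fin r))) : Prop :=
  ↑S ⊆ 𝓕 ∧ ∀ T ⊆ S, 2 ≤ T.card →
    (∀ A ∈ T, ∀ B ∈ T, A ≠ B → ¬ A ⊆ B ∧ ¬ B ⊆ A) →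
    T.sup id ∉ 𝓕

/-- The simplex `Δ_F = conv{e_i : i ∈ F}`. -/
noncomputable def faceSimplex {r : ℕ} (F : Finset (Fin r)) : Set (Fin r → ℝ) :=
  convexHull ℝ ((fun i => (Pi.single i 1 : Fin r → ℝ)) '' ↑F)

/-- The Minkowski sum `Δ_𝓕 = Σ_{F ∈ 𝓕} Δ_F`. -/
noncomputable def minkSum {r : ℕ} (𝓕 : Finset (Finset (Fin r))) : Set (Fin r → ℝ) :=
  ∑ F ∈ 𝓕, faceSimplex F

/-!
The bases `σ` of `M` with `|σ ∩ F| = rk F` are exactly the bases of `M|F ⊕ M/F`, so the face is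
the base polytope of that matroid. In the base polytope of a matroid on `[n]`, a separator `K`
(a set crossed by no circuit) makes `∑_{i ∈ K} x_i = |B ∩ K|` constant, while a circuit through
`i ≠ j` yields two bases whose indicator vectors differ by `e_i - e_j`. Since `F` is a separator
of `M|F ⊕ M/F`, connectivity of `M|F` and `M/F` gives `n - 2` independent edge directions, and a
disconnection of either splits off a third separator, forcing dimension at most `n - 3`.
-/

namespace Matroid

variable {α : Type*} {N N₁ N₂ : Matroid α} {A B B' C C₁ C₂ J K L X : Set α} {i j k : α}

def InCommonCircuit (N : Matroid α) (i j : α) : Prop :=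
  ∃ C, N.IsCircuit C ∧ i ∈ C ∧ j ∈ C

def component (N : Matroid α) (i : α) : Set α :=
  {k | k = i ∨ N.InCommonCircuit i k}

def ConnectedOn (N : Matroid α) (E : Set α) : Prop :=
  ∀ i ∈ E, ∀ j ∈ E, i ≠ j → N.InCommonCircuit i j

/-- Unlike the usual notion of a separator, `K` need not lie in the ground set. -/
def IsSeparator (N : Matroid α) (K : Set α) : Prop :=
  ∀ C, N.IsCircuit C → C ⊆ K ∨ Disjoint C K

lemma IsCircuit.inCommonCircuit_of_inter_nonempty [N.Finitary] (hC₁ : N.IsCircuit C₁)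
    (hC₂ : N.IsCircuit C₂) (hi : i ∈ C₁) (hk : k ∈ C₂) (h : (C₁ ∩ C₂).Nonempty) :
    N.InCommonCircuit i k := by
  induction hm : (C₁ ∪ C₂).ncard using Nat.strong_induction_on generalizing C₂ with
  | _ m ih =>
    by_cases hkC₁ : k ∈ C₁
    · exact ⟨C₁, hC₁, hi, hkC₁⟩
    by_cases hiC₂ : i ∈ C₂
    · exact ⟨C₂, hC₂, hiC₂, hk⟩
    obtain ⟨x, hx₁, hx₂⟩ := h
    obtain ⟨C₃, hC₃ss, hC₃, hiC₃⟩ := hC₁.strong_elimination hC₂ hx₁ hx₂ hi hiC₂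
    by_cases hkC₃ : k ∈ C₃
    · exact ⟨C₃, hC₃, hiC₃, hkC₃⟩
    -- `C₃` avoids `x ∈ C₁`, so it cannot lie inside `C₁`: it meets `C₂ \ C₁` in some `y`.
    obtain ⟨y, hyC₃, hyC₁⟩ : ∃ y ∈ C₃, y ∉ C₁ := by
      by_contra! hsub
      exact hC₁.not_ssubset hC₃
        ((Set.ssubset_iff_of_subset hsub).2 ⟨x, hx₁, (hC₃ss · |>.2 rfl)⟩)
    have hyC₂ : y ∈ C₂ := ((hC₃ss hyC₃).1).resolve_left hyC₁
    -- Eliminating `y` keeps `k` and makes `C₁ ∪ C₄` smaller than `C₁ ∪ C₂`.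
    obtain ⟨C₄, hC₄ss, hC₄, hkC₄⟩ := hC₂.strong_elimination hC₃ hyC₂ hyC₃ hk hkC₃
    have hC₄sub : C₄ ⊆ (C₁ ∪ C₂) \ {y} := fun z hz ↦
      ⟨((hC₄ss hz).1).elim Or.inr fun h ↦ ((hC₃ss h).1), (hC₄ss hz).2⟩
    have hmeet : (C₁ ∩ C₄).Nonempty := by
      by_contra! hdisj
      have hsub : C₄ ⊆ C₂ := fun z hz ↦
        ((hC₄sub hz).1).resolve_left fun h ↦ Set.eq_empty_iff_forall_notMem.1 hdisj z ⟨h, hz⟩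
      exact hC₂.not_ssubset hC₄
        ((Set.ssubset_iff_of_subset hsub).2 ⟨y, hyC₂, (hC₄sub · |>.2 rfl)⟩)
    refine ih _ ?_ hC₄ hkC₄ hmeet rfl
    rw [← hm]
    have hsub : C₁ ∪ C₄ ⊆ C₁ ∪ C₂ :=
      Set.union_subset Set.subset_union_left fun z hz ↦ (hC₄sub hz).1
    refine Set.ncard_lt_ncard ((Set.ssubset_iff_of_subset hsub).2 ⟨y, Or.inr hyC₂, ?_⟩)
      (hC₁.finite.union hC₂.finite)
    rintro (h | h)
    exacts [hyC₁ h, (hC₄sub h).2 rfl]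

lemma InCommonCircuit.trans [N.Finitary] (h₁ : N.InCommonCircuit i j)
    (h₂ : N.InCommonCircuit j k) : N.InCommonCircuit i k := by
  obtain ⟨C₁, hC₁, hi, hj₁⟩ := h₁
  obtain ⟨C₂, hC₂, hj₂, hk⟩ := h₂
  exact hC₁.inCommonCircuit_of_inter_nonempty hC₂ hi hk ⟨j, hj₁, hj₂⟩

lemma isSeparator_component [N.Finitary] (i : α) : N.IsSeparator (N.component i) := by
  intro C hC
  by_cases h : ∃ k ∈ C, k = i ∨ N.InCommonCircuit i k
  · obtain ⟨k, hkC, rfl | hik⟩ := h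
    · exact Or.inl fun x hx ↦ Or.inr ⟨C, hC, hkC, hx⟩
    · exact Or.inl fun x hx ↦ Or.inr (hik.trans ⟨C, hC, hkC, hx⟩)
  · exact Or.inr (Set.disjoint_left.2 fun k hk hk' ↦ h ⟨k, hk, hk'⟩)

lemma IsSeparator.compl (hK : N.IsSeparator K) : N.IsSeparator Kᶜ := fun C hC ↦
  (hK C hC).symm.imp Set.subset_compl_iff_disjoint_right.2 Set.disjoint_compl_right_iff_subset.2

lemma IsSeparator.inter (hK : N.IsSeparator K) (hL : N.IsSeparator L) :
    N.IsSeparator (K ∩ L) := by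
  intro C hC
  rcases hK C hC with hCK | hCK
  · rcases hL C hC with hCL | hCL
    · exact Or.inl (Set.subset_inter hCK hCL)
    · exact Or.inr (hCL.mono_right Set.inter_subset_right)
  · exact Or.inr (hCK.mono_right Set.inter_subset_left)

lemma IsSeparator.ncard_inter_eq [N.RankFinite] (hK : N.IsSeparator K) (hB : N.IsBase B)
    (hB' : N.IsBase B') : (B ∩ K).ncard = (B' ∩ K).ncard := by
  suffices key : ∀ B B', N.IsBase B → N.IsBase B' → (B' ∩ K).ncard ≤ (B ∩ K).ncard from
    le_antisymm (key B' B hB' hB) (key B B' hB hB')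
  intro B B' hB hB'
  -- A circuit inside `(B' ∩ K) ∪ (B \ K)` would lie in `B'` or in `B`.
  have hI : N.Indep ((B' ∩ K) ∪ (B \ K)) := by
    rw [indep_iff_forall_subset_not_isCircuit
      (Set.union_subset (Set.inter_subset_left.trans hB'.subset_ground)
        (Set.sdiff_subset.trans hB.subset_ground))]
    intro C hCI hC
    rcases hK C hC with hCK | hCK
    · refine hC.not_indep (hB'.indep.subset fun x hx ↦ ?_)
      exact ((hCI hx).resolve_right fun h ↦ h.2 (hCK hx)).1
    · refine hC.not_indep (hB.indep.subset fun x hx ↦ ?_)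
      exact ((hCI hx).resolve_left fun h ↦ Set.disjoint_left.1 hCK hx h.2).1
  obtain ⟨B'', hB'', hIB''⟩ := hI.exists_isBase_superset
  have hle := Set.ncard_le_ncard hIB'' hB''.finite
  rw [hB''.ncard_eq_ncard_of_isBase hB, Set.ncard_union_eq
    (Set.disjoint_left.2 fun x hx h ↦ h.2 hx.2) (hB'.finite.inter_of_left K)
    hB.finite.sdiff, ← Set.ncard_inter_add_ncard_sdiff_eq_ncard B K hB.finite] at hle
  omega

lemma IsCircuit.exists_isBase_exchange (hC : N.IsCircuit C) (hi : i ∈ C) (hj : j ∈ C)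
    (hij : i ≠ j) :
    ∃ B, N.IsBase B ∧ i ∉ B ∧ j ∈ B ∧ N.IsBase (insert i B \ {j}) := by
  classical
  obtain ⟨B, hB, hCB⟩ := (hC.sdiff_singleton_indep hi).exists_isBase_superset
  have hiB : i ∉ B := fun hiB ↦
    hC.not_indep <| hB.indep.subset fun x hx ↦
      if hxi : x = i then hxi ▸ hiB else hCB ⟨hx, hxi⟩
  have hCfund : C = N.fundCircuit i B := hC.eq_fundCircuit_of_subset hB.indep
    fun x hx ↦ if hxi : x = i then Or.inl hxi else Or.inr (hCB ⟨hx, hxi⟩)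
  have hjB : j ∈ B := hCB ⟨hj, hij.symm⟩
  refine ⟨B, hB, hiB, hjB, hB.exchange_isBase_of_indep' hjB hiB ?_⟩
  rw [← hB.indep.mem_fundCircuit_iff (by rw [hB.closure_eq]; exact hC.subset_ground hi) hiB,
    ← hCfund]
  exact hj

lemma IsBasis.contract_isBase_iff (hA : N.IsBasis A X) :
    (N ／ X).IsBase J ↔ N.IsBase (J ∪ A) ∧ Disjoint J X := by
  refine ⟨fun hJ ↦ ?_, fun ⟨hJA, hJX⟩ ↦ ?_⟩
  · obtain ⟨hJA, hXJ⟩ := hA.contract_indep_iff.1 hJ.indep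
    refine ⟨hJA.isBase_of_forall_insert fun e he hins ↦ ?_, hXJ.symm⟩
    have heJ : e ∉ J := fun h ↦ he.2 (Or.inl h)
    by_cases heX : e ∈ X
    · exact (hA.insert_dep ⟨heX, fun h ↦ he.2 (Or.inr h)⟩).not_indep
        (hins.subset (Set.insert_subset_insert Set.subset_union_right))
    · refine (hJ.insert_dep ⟨⟨he.1, heX⟩, heJ⟩).not_indep
        (hA.contract_indep_iff.2 ⟨?_, ?_⟩)
      · rwa [Set.insert_union]
      · exact Set.disjoint_insert_right.2 ⟨heX, hXJ⟩
  · refine (hA.contract_indep_iff.2 ⟨hJA.indep, hJX.symm⟩).isBase_of_forall_insert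
      fun e he hins ↦ ?_
    have heX : e ∉ X := fun h ↦ he.1.2 h
    refine (hJA.insert_dep ⟨he.1.1, ?_⟩).not_indep ?_
    · rintro (h | h)
      exacts [he.2 h, heX (hA.subset h)]
    · rw [← Set.insert_union]
      exact (hA.contract_indep_iff.1 hins).1

lemma disjoint_restrict_ground_contract_ground (N : Matroid α) (X : Set α) :
    Disjoint (N ↾ X).E (N ／ X).E := by
  rw [restrict_ground_eq, contract_ground]
  exact Set.disjoint_sdiff_right

lemma IsCircuit.disjointSum_left (hC : N₁.IsCircuit C) {h : Disjoint N₁.E N₂.E} :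
    (N₁.disjointSum N₂ h).IsCircuit C := by
  have hCE := hC.subset_ground
  rw [isCircuit_iff_forall_ssubset, dep_iff, disjointSum_indep_iff, disjointSum_ground_eq,
    Set.inter_eq_left.2 hCE]
  refine ⟨⟨fun hI ↦ hC.not_indep hI.1, hCE.trans Set.subset_union_left⟩, fun I hIC ↦ ?_⟩
  have hIE := hIC.subset.trans hCE
  rw [disjointSum_indep_iff, Set.inter_eq_left.2 hIE, (h.mono_left hIE).inter_eq]
  exact ⟨hC.ssubset_indep hIC, N₂.empty_indep, hIE.trans Set.subset_union_left⟩

lemma isCircuit_disjointSum_iff {h : Disjoint N₁.E N₂.E} :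
    (N₁.disjointSum N₂ h).IsCircuit C ↔ N₁.IsCircuit C ∨ N₂.IsCircuit C := by
  refine ⟨fun hC ↦ ?_, fun hC ↦ hC.elim (·.disjointSum_left) fun hC ↦ ?_⟩
  · -- A dependent part of `C` on either side contains a circuit of that side, which is `C`.
    have hdep := hC.not_indep
    rw [disjointSum_indep_iff, not_and_or, not_and_or] at hdep
    rcases hdep with h₁ | h₂ | hE
    · obtain ⟨C', hC'C, hC'⟩ :=
        (dep_iff.2 ⟨h₁, Set.inter_subset_right⟩).exists_isCircuit_subset
      rw [← hC'.disjointSum_left.eq_of_subset_isCircuit hC (hC'C.trans Set.inter_subset_left)]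
      exact Or.inl hC'
    · obtain ⟨C', hC'C, hC'⟩ :=
        (dep_iff.2 ⟨h₂, Set.inter_subset_right⟩).exists_isCircuit_subset
      have hC'' : (N₁.disjointSum N₂ h).IsCircuit C' := by
        rw [disjointSum_comm]
        exact hC'.disjointSum_left
      rw [← hC''.eq_of_subset_isCircuit hC (hC'C.trans Set.inter_subset_left)]
      exact Or.inr hC'
    · exact (hE (hC.subset_ground.trans_eq disjointSum_ground_eq)).elim
  · rw [disjointSum_comm]
    exact hC.disjointSum_left

lemma isSeparator_disjointSum_ground_left {h : Disjoint N₁.E N₂.E} :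
    (N₁.disjointSum N₂ h).IsSeparator N₁.E := by
  intro C hC
  rcases isCircuit_disjointSum_iff.1 hC with hC | hC
  exacts [Or.inl hC.subset_ground, Or.inr (h.symm.mono_left hC.subset_ground)]

lemma connectedOn_disjointSum_ground_left_iff {h : Disjoint N₁.E N₂.E} :
    (N₁.disjointSum N₂ h).ConnectedOn N₁.E ↔ N₁.ConnectedOn N₁.E := by
  refine forall₂_congr fun i hi ↦ forall₂_congr fun j _ ↦ imp_congr_right fun _ ↦ ?_
  refine ⟨fun ⟨C, hC, hiC, hjC⟩ ↦ ?_,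
    fun ⟨C, hC, hiC, hjC⟩ ↦ ⟨C, hC.disjointSum_left, hiC, hjC⟩⟩
  refine ⟨C, (isCircuit_disjointSum_iff.1 hC).resolve_right fun hC₂ ↦ ?_, hiC, hjC⟩
  exact Set.disjoint_left.1 h hi (hC₂.subset_ground hiC)

lemma connectedOn_disjointSum_ground_right_iff {h : Disjoint N₁.E N₂.E} :
    (N₁.disjointSum N₂ h).ConnectedOn N₂.E ↔ N₂.ConnectedOn N₂.E := by
  rw [disjointSum_comm]
  exact connectedOn_disjointSum_ground_left_iff

end Matroid

section BasesFamily

variable {n : ℕ} {𝔅 : Finset (Finset (Fin n))} {N : Matroid (Fin n)}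

lemma famIndep_iff_indep (h𝔅 : ∀ σ : Finset (Fin n), σ ∈ 𝔅 ↔ N.IsBase σ)
    {I : Finset (Fin n)} : FamIndep 𝔅 I ↔ N.Indep I := by
  rw [Matroid.indep_iff]
  constructor
  · rintro ⟨B, hB, hIB⟩
    exact ⟨B, (h𝔅 B).1 hB, Finset.coe_subset.2 hIB⟩
  · rintro ⟨B, hB, hIB⟩
    lift B to Finset (Fin n) using B.toFinite
    exact ⟨B, (h𝔅 B).2 hB, Finset.coe_subset.1 hIB⟩

lemma famCircuit_iff_isCircuit (h𝔅 : ∀ σ : Finset (Fin n), σ ∈ 𝔅 ↔ N.IsBase σ)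
    {C : Finset (Fin n)} (hC : ↑C ⊆ N.E) : FamCircuit 𝔅 C ↔ N.IsCircuit C := by
  rw [Matroid.isCircuit_iff_forall_ssubset, Matroid.dep_iff, FamCircuit, famIndep_iff_indep h𝔅,
    and_iff_left hC]
  refine and_congr_right fun _ ↦ ⟨fun hsub I hIC ↦ ?_, fun hsub D hDC ↦ ?_⟩
  · lift I to Finset (Fin n) using I.toFinite
    exact (famIndep_iff_indep h𝔅).1 (hsub I (Finset.coe_ssubset.1 hIC))
  · exact (famIndep_iff_indep h𝔅).2 (hsub (Finset.coe_ssubset.2 hDC))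

lemma famConnectedOn_iff (h𝔅 : ∀ σ : Finset (Fin n), σ ∈ 𝔅 ↔ N.IsBase σ)
    {E : Finset (Fin n)} (hE : N.E = E) : FamConnectedOn 𝔅 E ↔ N.ConnectedOn E := by
  refine forall₂_congr fun i _ ↦ forall₂_congr fun j _ ↦ imp_congr_right fun _ ↦ ?_
  constructor
  · rintro ⟨C, hCE, hC, hi, hj⟩
    exact ⟨C, (famCircuit_iff_isCircuit h𝔅 (hE ▸ Finset.coe_subset.2 hCE)).1 hC, hi, hj⟩
  · rintro ⟨C, hC, hi, hj⟩
    lift C to Finset (Fin n) using C.toFinite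
    have hCE := hC.subset_ground
    exact ⟨C, Finset.coe_subset.1 (hE ▸ hCE), (famCircuit_iff_isCircuit h𝔅 hCE).2 hC,
      hi, hj⟩

end BasesFamily

namespace FinMatroid

open scoped Matroid

variable {n r : ℕ} (M : FinMatroid n r) {F σ A : Finset (Fin n)}

def toMatroid : Matroid (Fin n) :=
  Matroid.ofIsBaseOfFinite Set.finite_univ (fun B ↦ ∃ σ ∈ M.bases, (σ : Set (Fin n)) = B)
    (let ⟨σ, hσ⟩ := M.bases_nonempty; ⟨σ, σ, hσ, rfl⟩)
    (by
      classical
      rintro _ _ ⟨σ₁, hσ₁, rfl⟩ ⟨σ₂, hσ₂, rfl⟩ a ha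
      obtain ⟨b, hb, hex⟩ := M.exchange σ₁ hσ₁ σ₂ hσ₂ a (by simpa using ha)
      exact ⟨b, by simpa using hb, _, hex, by simp⟩)
    (fun _ _ ↦ Set.subset_univ _)

@[simp] lemma toMatroid_E : M.toMatroid.E = Set.univ := rfl

lemma isBase_toMatroid_iff : M.toMatroid.IsBase σ ↔ σ ∈ M.bases :=
  ⟨fun ⟨_, hσ', h⟩ ↦ Finset.coe_injective h ▸ hσ', fun hσ ↦ ⟨σ, hσ, rfl⟩⟩

lemma card_eq_rk_of_isBasis (hA : M.toMatroid.IsBasis A F) : A.card = M.rk F := by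
  classical
  have hbases := fun σ : Finset (Fin n) ↦ (M.isBase_toMatroid_iff (σ := σ)).symm
  refine le_antisymm (Finset.le_sup (f := Finset.card) (Finset.mem_filter.2
    ⟨Finset.mem_powerset.2 (Finset.coe_subset.1 hA.subset),
      (famIndep_iff_indep hbases).2 hA.indep⟩)) (Finset.sup_le fun I hI ↦ ?_)
  obtain ⟨hIF, hI⟩ := Finset.mem_filter.1 hI
  obtain ⟨J, hJ, hIJ⟩ := ((famIndep_iff_indep hbases).1 hI).subset_isBasis_of_subset
    (Finset.coe_subset.2 (Finset.mem_powerset.1 hIF))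
  rw [← Set.ncard_coe_finset I, ← Set.ncard_coe_finset A,
    hA.isBase_restrict.ncard_eq_ncard_of_isBase hJ.isBase_restrict]
  exact Set.ncard_le_ncard hIJ J.toFinite

lemma isBasis_inter_iff_card_eq (hσ : σ ∈ M.bases) :
    M.toMatroid.IsBasis ↑(σ ∩ F) F ↔ (σ ∩ F).card = M.rk F := by
  refine ⟨M.card_eq_rk_of_isBasis, fun hcard ↦ ?_⟩
  have hind : M.toMatroid.Indep ↑(σ ∩ F) :=
    ((M.isBase_toMatroid_iff).2 hσ).indep.subset (by simp)
  obtain ⟨J, hJ, hσJ⟩ := hind.subset_isBasis_of_subset (X := F) (by simp)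
  lift J to Finset (Fin n) using J.toFinite
  have hJσ : σ ∩ F = J := Finset.eq_of_subset_of_card_le (Finset.coe_subset.1 hσJ)
    (by rw [hcard, M.card_eq_rk_of_isBasis hJ])
  rwa [hJσ]

lemma mem_restrictBases_iff :
    σ ∈ M.restrictBases F ↔ (M.toMatroid ↾ (F : Set (Fin n))).IsBase σ := by
  have hbases := fun σ : Finset (Fin n) ↦ (M.isBase_toMatroid_iff (σ := σ)).symm
  simp only [restrictBases, famRestrictBases, Finset.mem_filter, Finset.mem_powerset,
    Matroid.isBase_restrict_iff (M := M.toMatroid) (X := F) (by simp), Matroid.IsBasis,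
    toMatroid_E, Set.subset_univ, and_true, famIndep_iff_indep hbases, Maximal]
  constructor
  · rintro ⟨hσF, hσ, hmax⟩
    refine ⟨⟨hσ, Finset.coe_subset.2 hσF⟩, fun Y ⟨hY, hYF⟩ hσY ↦ ?_⟩
    lift Y to Finset (Fin n) using Y.toFinite
    exact (hmax Y (Finset.coe_subset.1 hYF) hY (Finset.coe_subset.1 hσY)).symm ▸ subset_rfl
  · rintro ⟨⟨hσ, hσF⟩, hmax⟩
    refine ⟨Finset.coe_subset.1 hσF, hσ, fun B hBF hB hσB ↦ ?_⟩
    exact Finset.Subset.antisymm hσB (Finset.coe_subset.1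
      (hmax ⟨hB, Finset.coe_subset.2 hBF⟩ (Finset.coe_subset.2 hσB)))

def faceMatroid (M : FinMatroid n r) (F : Finset (Fin n)) : Matroid (Fin n) :=
  (M.toMatroid ↾ (F : Set (Fin n))).disjointSum (M.toMatroid ／ (F : Set (Fin n)))
    (M.toMatroid.disjoint_restrict_ground_contract_ground F)

lemma isBase_faceMatroid_iff :
    (M.faceMatroid F).IsBase σ ↔ σ ∈ M.bases ∧ (σ ∩ F).card = M.rk F := by
  have hsplit : (σ : Set (Fin n)) ∩ (Set.univ \ F) ∪ ↑(σ ∩ F) = σ := by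
    ext; simp only [Set.mem_union, Set.mem_inter_iff, Set.mem_sdiff, Finset.coe_inter]; tauto
  have hdisj : Disjoint ((σ : Set (Fin n)) ∩ (Set.univ \ F)) F :=
    Set.disjoint_sdiff_left.mono_left Set.inter_subset_right
  rw [faceMatroid, Matroid.disjointSum_isBase_iff]
  simp only [Matroid.restrict_ground_eq, Matroid.contract_ground, toMatroid_E,
    Set.union_sdiff_self, Set.union_univ, Set.subset_univ, and_true,
    Matroid.isBase_restrict_iff (M := M.toMatroid) (X := F) (by simp), ← Finset.coe_inter]
  constructor
  · rintro ⟨hbasis, hcontr⟩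
    have hσ := (hbasis.contract_isBase_iff.1 hcontr).1
    rw [hsplit] at hσ
    exact ⟨M.isBase_toMatroid_iff.1 hσ, M.card_eq_rk_of_isBasis hbasis⟩
  · rintro ⟨hσ, hcard⟩
    have hbasis := (M.isBasis_inter_iff_card_eq hσ).2 hcard
    exact ⟨hbasis, hbasis.contract_isBase_iff.2
      ⟨hsplit.symm ▸ M.isBase_toMatroid_iff.2 hσ, hdisj⟩⟩

lemma mem_contractBases_iff :
    σ ∈ M.contractBases F ↔ (M.toMatroid ／ (F : Set (Fin n))).IsBase σ := by
  classical
  simp only [contractBases, famContractBases, Finset.mem_image, Finset.mem_filter]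
  constructor
  · rintro ⟨B, hB, rfl⟩
    have hB' := (M.isBase_faceMatroid_iff (σ := B)).2 hB
    rw [faceMatroid, Matroid.disjointSum_isBase_iff] at hB'
    simpa [Set.sdiff_eq, Set.inter_comm] using hB'.2.1
  · intro hσ
    obtain ⟨A, hA⟩ := (M.toMatroid ↾ (F : Set (Fin n))).exists_isBase
    lift A to Finset (Fin n) using A.toFinite
    have hAF : A ⊆ F := Finset.coe_subset.1 hA.subset_ground
    have hσF : Disjoint σ F := by
      have := hσ.subset_ground
      rw [Matroid.contract_ground, toMatroid_E] at this
      exact Finset.disjoint_coe.1 (Set.disjoint_of_subset_left this Set.disjoint_sdiff_left)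
    have hinter : (A ∪ σ) ∩ F = A := by
      rw [Finset.union_inter_distrib_right, Finset.inter_eq_left.2 hAF,
        Finset.disjoint_iff_inter_eq_empty.1 hσF, Finset.union_empty]
    have hsdiff : (A ∪ σ) \ F = σ := by
      rw [Finset.union_sdiff_distrib, Finset.sdiff_eq_empty_iff_subset.2 hAF, Finset.empty_union,
        hσF.sdiff_eq_left]
    refine ⟨A ∪ σ, (M.isBase_faceMatroid_iff).1
      (Matroid.disjointSum_isBase_iff.2 ⟨?_, ?_, by simp⟩), hsdiff⟩
    · rwa [Matroid.restrict_ground_eq, ← Finset.coe_inter, hinter]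
    · have hground :
          (↑(A ∪ σ) : Set (Fin n)) ∩ (M.toMatroid ／ (F : Set (Fin n))).E = σ := by
        rw [Matroid.contract_ground, toMatroid_E]
        conv_rhs => rw [← hsdiff]
        ext; simp
      rwa [hground]

lemma connectedOn_faceMatroid_iff_restrict :
    (M.faceMatroid F).ConnectedOn F ↔ FamConnectedOn (M.restrictBases F) F := by
  rw [famConnectedOn_iff (fun _ ↦ M.mem_restrictBases_iff) rfl]
  exact Matroid.connectedOn_disjointSum_ground_left_iff

lemma connectedOn_faceMatroid_iff_contract :
    (M.faceMatroid F).ConnectedOn ↑Fᶜ ↔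
      FamConnectedOn (M.contractBases F) (Finset.univ \ F) := by
  have hground : (M.toMatroid ／ (F : Set (Fin n))).E = ↑(Finset.univ \ F) := by simp
  rw [famConnectedOn_iff (fun _ ↦ M.mem_contractBases_iff) hground, ← hground, Finset.coe_compl,
    Set.compl_eq_univ_sdiff, ← toMatroid_E, ← Matroid.contract_ground]
  exact Matroid.connectedOn_disjointSum_ground_right_iff

end FinMatroid

section IndicatorVectors

variable {n : ℕ}

lemma sum_indVec (B K : Finset (Fin n)) : ∑ i ∈ K, indVec B i = (B ∩ K).card := by
  classical
  simp only [indVec, Finset.sum_boole, Finset.filter_mem_eq_inter, Finset.inter_comm]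

lemma indVec_insert_erase_sub {B : Finset (Fin n)} {i j : Fin n} (hi : i ∉ B) (hj : j ∈ B) :
    indVec (insert i (B.erase j)) - indVec B = Pi.single i (1 : ℝ) - Pi.single j 1 := by
  have hij : i ≠ j := ne_of_mem_of_not_mem hj hi |>.symm
  funext k
  by_cases hki : k = i
  · subst hki; simp [indVec, hi, hij]
  by_cases hkj : k = j
  · subst hkj; simp [indVec, hj, hki]
  simp [indVec, hki, hkj]

lemma finrank_vectorSpan_add_le {c : ℕ} (s : Set (Fin n → ℝ)) (P : Fin c → Finset (Fin n))
    (hdisj : ∀ t t', t ≠ t' → Disjoint (P t) (P t')) (hne : ∀ t, (P t).Nonempty)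
    (hconst : ∀ t, ∀ x ∈ s, ∀ y ∈ s, ∑ i ∈ P t, x i = ∑ i ∈ P t, y i) :
    Module.finrank ℝ (vectorSpan ℝ s) + c ≤ n := by
  classical
  choose rep hrep using hne
  let Φ : (Fin n → ℝ) →ₗ[ℝ] (Fin c → ℝ) :=
    LinearMap.pi fun t ↦ ∑ i ∈ P t, LinearMap.proj i
  have hΦ : ∀ x t, Φ x t = ∑ i ∈ P t, x i := fun x t ↦ by simp [Φ]
  have hrange : LinearMap.range Φ = ⊤ := by
    rw [eq_top_iff, ← (Pi.basisFun ℝ (Fin c)).span_eq, Submodule.span_le]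
    rintro _ ⟨t, rfl⟩
    refine ⟨Pi.single (rep t) 1, funext fun t' ↦ ?_⟩
    rw [hΦ, Finset.sum_pi_single', Pi.basisFun_apply]
    by_cases h : t' = t
    · subst h; simp [hrep]
    · simp [h, Finset.disjoint_left.1 (hdisj t t' (Ne.symm h)) (hrep t)]
  have hker : vectorSpan ℝ s ≤ LinearMap.ker Φ := by
    rw [vectorSpan_def, Submodule.span_le]
    rintro _ ⟨x, hx, y, hy, rfl⟩
    ext t
    simp [hΦ, hconst t x hx y hy]
  have hrank := Φ.finrank_range_add_finrank_ker
  rw [hrange, finrank_top, Module.finrank_fin_fun, Module.finrank_fin_fun] at hrank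
  have := Submodule.finrank_mono hker
  omega

lemma card_le_finrank_vectorSpan (s : Set (Fin n → ℝ)) (D : Finset (Fin n))
    (ref : Fin n → Fin n) (href : ∀ k ∈ D, ref k ∉ D)
    (hmem : ∀ k ∈ D, Pi.single k (1 : ℝ) - Pi.single (ref k) 1 ∈ vectorSpan ℝ s) :
    D.card ≤ Module.finrank ℝ (vectorSpan ℝ s) := by
  classical
  -- Restricting coordinates to `D` maps the given vectors onto the standard basis of `ℝ^D`.
  let g := (LinearMap.funLeft ℝ ℝ (Subtype.val : D → Fin n)).comp (vectorSpan ℝ s).subtype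
  have hg : LinearMap.range g = ⊤ := by
    rw [eq_top_iff, ← (Pi.basisFun ℝ D).span_eq, Submodule.span_le]
    rintro _ ⟨k, rfl⟩
    refine ⟨⟨_, hmem k k.2⟩, funext fun l ↦ ?_⟩
    have hl : (l : Fin n) ≠ ref k := fun h ↦ href k k.2 (h ▸ l.2)
    change (Pi.single (k : Fin n) (1 : ℝ) - Pi.single (ref k) 1 : Fin n → ℝ) l =
      Pi.basisFun ℝ D k l
    rw [Pi.basisFun_apply, Pi.sub_apply, Pi.single_apply, Pi.single_apply, Pi.single_apply,
      if_neg hl, sub_zero]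
    simp only [Subtype.val_inj]
  have := g.finrank_range_le
  rwa [hg, finrank_top, Module.finrank_fintype_fun_eq_card, Fintype.card_coe] at this

end IndicatorVectors

namespace Matroid

variable {n : ℕ} {D : Matroid (Fin n)} {E K : Finset (Fin n)} {i j : Fin n}

def baseIndicators (D : Matroid (Fin n)) : Set (Fin n → ℝ) := indVec '' {B | D.IsBase ↑B}

lemma IsSeparator.sum_indVec_eq (hK : D.IsSeparator K) :
    ∀ x ∈ D.baseIndicators, ∀ y ∈ D.baseIndicators,
      ∑ i ∈ K, x i = ∑ i ∈ K, y i := by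
  rintro _ ⟨B, hB, rfl⟩ _ ⟨B', hB', rfl⟩
  rw [sum_indVec, sum_indVec, ← Set.ncard_coe_finset, ← Set.ncard_coe_finset, Finset.coe_inter,
    Finset.coe_inter, hK.ncard_inter_eq hB hB']

lemma finrank_vectorSpan_baseIndicators_add_le {c : ℕ} (P : Fin c → Finset (Fin n))
    (hdisj : ∀ t t', t ≠ t' → Disjoint (P t) (P t')) (hne : ∀ t, (P t).Nonempty)
    (hsep : ∀ t, D.IsSeparator ↑(P t)) :
    Module.finrank ℝ (vectorSpan ℝ D.baseIndicators) + c ≤ n :=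
  finrank_vectorSpan_add_le _ P hdisj hne fun t ↦ (hsep t).sum_indVec_eq

lemma InCommonCircuit.single_sub_mem_vectorSpan (h : D.InCommonCircuit i j) (hij : i ≠ j) :
    Pi.single i (1 : ℝ) - Pi.single j 1 ∈ vectorSpan ℝ D.baseIndicators := by
  classical
  obtain ⟨C, hC, hi, hj⟩ := h
  obtain ⟨B, hB, hiB, hjB, hB'⟩ := hC.exists_isBase_exchange hi hj hij
  lift B to Finset (Fin n) using B.toFinite
  have hcoe : (insert i ↑B \ {j} : Set (Fin n)) = ↑(insert i (B.erase j)) := by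
    ext x
    simp only [Set.mem_sdiff, Set.mem_insert_iff, Finset.mem_coe, Set.mem_singleton_iff,
      Finset.coe_insert, Finset.coe_erase]
    constructor
    · rintro ⟨rfl | hx, hxj⟩
      exacts [Or.inl rfl, Or.inr ⟨hx, hxj⟩]
    · rintro (rfl | ⟨hx, hxj⟩)
      exacts [⟨Or.inl rfl, hij⟩, ⟨Or.inr hx, hxj⟩]
  rw [hcoe] at hB'
  rw [← indVec_insert_erase_sub hiB hjB, ← vsub_eq_sub]
  exact vsub_mem_vectorSpan ℝ ⟨_, hB', rfl⟩ ⟨B, hB, rfl⟩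

lemma connectedOn_of_finrank_vectorSpan_eq (hE : D.IsSeparator E) (hne : Eᶜ.Nonempty)
    (h : Module.finrank ℝ (vectorSpan ℝ D.baseIndicators) = n - 2) : D.ConnectedOn E := by
  intro i hi j hj hij
  by_contra hij'
  -- Otherwise the component of `i` splits `E`: three parts with constant coordinate sums.
  obtain ⟨K, hK⟩ : ∃ K : Finset (Fin n), ↑K = D.component i :=
    ⟨_, (Set.toFinite _).coe_toFinset⟩
  have hKsep : D.IsSeparator K := hK ▸ isSeparator_component i
  have hiK : i ∈ K := by rw [← Finset.mem_coe, hK]; exact Or.inl rfl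
  have hjK : j ∉ K := by
    rw [← Finset.mem_coe, hK]
    rintro (rfl | h)
    exacts [hij rfl, hij' h]
  have hle := finrank_vectorSpan_baseIndicators_add_le ![E ∩ K, E \ K, Eᶜ]
    (by
      intro t t' htt'
      fin_cases t <;> fin_cases t' <;> simp_all [Finset.disjoint_left])
    (by
      intro t
      fin_cases t
      exacts [⟨i, Finset.mem_inter.2 ⟨hi, hiK⟩⟩, ⟨j, Finset.mem_sdiff.2 ⟨hj, hjK⟩⟩,
        hne])
    (by
      intro t
      fin_cases t
      · simpa using hE.inter hKsep
      · simpa [Set.sdiff_eq] using hE.inter hKsep.compl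
      · simpa using hE.compl)
  omega

lemma le_finrank_vectorSpan_of_connectedOn (hne : E.Nonempty) (hne' : Eᶜ.Nonempty)
    (h : D.ConnectedOn E) (h' : D.ConnectedOn ↑Eᶜ) :
    n - 2 ≤ Module.finrank ℝ (vectorSpan ℝ D.baseIndicators) := by
  classical
  obtain ⟨i₀, hi₀⟩ := hne
  obtain ⟨j₀, hj₀⟩ := hne'
  have hij₀ : i₀ ≠ j₀ := fun h ↦ Finset.mem_compl.1 hj₀ (h ▸ hi₀)
  have hle := card_le_finrank_vectorSpan D.baseIndicators {i₀, j₀}ᶜ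
    (fun k ↦ if k ∈ E then i₀ else j₀)
    (fun k _ ↦ by split_ifs <;> simp)
    (fun k hk ↦ by
      simp only [Finset.mem_compl, Finset.mem_insert, Finset.mem_singleton, not_or] at hk
      split_ifs with hkE
      · exact (h k hkE i₀ hi₀ hk.1).single_sub_mem_vectorSpan hk.1
      · exact (h' k (Finset.mem_compl.2 hkE) j₀ hj₀ hk.2).single_sub_mem_vectorSpan hk.2)
  rwa [Finset.card_compl, Finset.card_pair hij₀, Fintype.card_fin] at hle

theorem finrank_vectorSpan_baseIndicators_eq_iff (hE : D.IsSeparator E) (hne : E.Nonempty)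
    (hne' : Eᶜ.Nonempty) :
    Module.finrank ℝ (vectorSpan ℝ D.baseIndicators) = n - 2 ↔
      D.ConnectedOn E ∧ D.ConnectedOn ↑Eᶜ := by
  have hEc : D.IsSeparator ↑Eᶜ := by simpa using hE.compl
  refine ⟨fun h ↦ ⟨connectedOn_of_finrank_vectorSpan_eq hE hne' h,
    connectedOn_of_finrank_vectorSpan_eq hEc (by simpa using hne) h⟩, fun ⟨h, h'⟩ ↦ ?_⟩
  have hle := finrank_vectorSpan_baseIndicators_add_le ![E, Eᶜ]
    (by
      intro t t' htt'
      fin_cases t <;> fin_cases t' <;> simp_all [disjoint_compl_right, disjoint_compl_left])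
    (by intro t; fin_cases t; exacts [hne, hne'])
    (by intro t; fin_cases t; exacts [hE, hEc])
  have := le_finrank_vectorSpan_of_connectedOn hne hne' h h'
  omega

end Matroid

theorem statement5_general {n r : ℕ} (M : FinMatroid n r) (F : Finset (Fin n))
    (hne : F ≠ ∅) (hpr : F ≠ Finset.univ) :
    Module.finrank ℝ (affineSpan ℝ (convexHull ℝ
        (indVec '' {σ | σ ∈ M.bases ∧ (σ ∩ F).card = M.rk F}))).direction = n - 2 ↔
      (FamConnectedOn (M.restrictBases F) F ∧
        FamConnectedOn (M.contractBases F) (Finset.univ \ F)) := by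
  have hface : indVec '' {σ | σ ∈ M.bases ∧ (σ ∩ F).card = M.rk F} =
      (M.faceMatroid F).baseIndicators := by
    simp only [Matroid.baseIndicators, M.isBase_faceMatroid_iff]
  rw [hface, affineSpan_convexHull, direction_affineSpan,
    Matroid.finrank_vectorSpan_baseIndicators_eq_iff Matroid.isSeparator_disjointSum_ground_left
      (Finset.nonempty_iff_ne_empty.2 hne)
      (Finset.nonempty_iff_ne_empty.2 fun h ↦ hpr ((Finset.compl_eq_empty_iff F).1 h)),
    M.connectedOn_faceMatroid_iff_restrict, M.connectedOn_faceMatroid_iff_contract]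

/-- For a connected matroid `M` on `[n]`, `n ≥ 2`, and a nonempty proper
flat `F`, the face of `P_M` maximizing `∑_{i∈F} x_i` has dimension `n - 2` (i.e. is a
facet) iff both the restriction `M|F` and the contraction `M/F` are connected. -/
theorem statement5 {n r : ℕ} (M : FinMatroid n r) (hn : 2 ≤ n)
    (hconn : M.numComponents = 1) (F : Finset (Fin n)) (hF : M.IsFlat F)
    (hne : F ≠ ∅) (hpr : F ≠ Finset.univ) :
    Module.finrank ℝ (affineSpan ℝ (convexHull ℝ
        (indVec '' {σ | σ ∈ M.bases ∧ (σ ∩ F).card = M.rk F}))).direction = n - 2 ↔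
      (FamConnectedOn (M.restrictBases F) F ∧
        FamConnectedOn (M.contractBases F) (Finset.univ \ F)) :=
  statement5_general M F hne hpr
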